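/- arXiv:2105.08105 — 3 statements merged into one kernel-verified Lean document; each statement's English description precedes it below -/
import Mathlib

section
/- The Composition axiom is sound for synonym OFDs: if a relation instance I satisfies X → Y and Z → W, then I satisfies XZ → YW (union of antecedents implies union of consequents). -/
variable {α V S : Type*}

/-- A synonym OFD `X → Y` holds in instance `I` if for every equivalence class of tuples
agreeing on all attributes of `X` (represented by a tuple `t ∈ I`), and every attribute
`A ∈ Y`, there is a common sense in `names (u A)` for all tuples `u` of the class. -/
def OFDsat (names : V → Set S) (I : Set (α → V)) (X Y : Set α) : Prop :=
  ∀ t ∈ I, ∀ A ∈ Y, ∃ s : S, ∀ u ∈ I, (∀ a ∈ X, u a = t a) → s ∈ names (u A)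

/-- Composition axiom is sound for synonym OFDs. -/
theorem composition_sound (names : V → Set S) (I : Set (α → V)) (hI : I.Finite)
    (X Y Z W : Set α) (h1 : OFDsat names I X Y) (h2 : OFDsat names I Z W) :
    OFDsat names I (X ∪ Z) (Y ∪ W) := by
  intro t ht A hA
  rcases hA with hA | hA
  · obtain ⟨s, hs⟩ := h1 t ht A hA
    exact ⟨s, fun u hu hagree => hs u hu fun a ha => hagree a (Or.inl ha)⟩
  · obtain ⟨s, hs⟩ := h2 t ht A hA
    exact ⟨s, fun u hu hagree => hs u hu fun a ha => hagree a (Or.inr ha)⟩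
end

section
/- Transitivity fails for synonym OFDs: there exists a relation instance I over attributes {A, B, C} and a sense assignment names such that I satisfies the synonym OFDs A → B and B → C, but I does not satisfy A → C. -/
variable {α V S : Type*}

/-- Transitivity fails for synonym OFDs: there is an instance over attributes
`{A, B, C} = Fin 3` satisfying `A → B` and `B → C` but not `A → C`. -/
theorem transitivity_fails :
    ∃ (V S : Type) (names : V → Set S) (I : Set (Fin 3 → V)),
      I.Finite ∧
      OFDsat names I {0} {1} ∧
      OFDsat names I {1} {2} ∧
      ¬ OFDsat names I {0} {2} := by
  -- values: 0 = a, 1 = b, 2 = c, 3 = d, 4 = e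
  refine ⟨Fin 5, ℕ, ![{9}, {0}, {0}, {1}, {2}], {![0,1,3], ![0,2,4]}, ?_, ?_, ?_, ?_⟩
  · exact (Set.finite_singleton _).insert _
  · -- A → B : both tuples agree on attribute 0; names(b) ∩ names(c) = {0}
    rintro t ht A hA
    simp only [Set.mem_singleton_iff] at hA
    subst hA
    refine ⟨0, ?_⟩
    rintro u (rfl | rfl) _ <;> simp
  · -- B → C : the tuples differ on attribute 1, so classes are singletons
    rintro t (rfl | rfl) A hA <;> simp only [Set.mem_singleton_iff] at hA <;> subst hA
    · refine ⟨1, ?_⟩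
      rintro u (rfl | rfl) h
      · simp
      · have := h 1 rfl
        simp [Matrix.cons_val_one] at this
    · refine ⟨2, ?_⟩
      rintro u (rfl | rfl) h
      · have := h 1 rfl
        simp [Matrix.cons_val_one] at this
      · simp
  · -- ¬ (A → C) : names(d) ∩ names(e) = ∅
    intro h
    obtain ⟨s, hs⟩ := h ![0,1,3] (Or.inl rfl) 2 rfl
    have h1 := hs ![0,1,3] (Or.inl rfl) (by rintro a rfl; rfl)
    have h2 := hs ![0,2,4] (Or.inr rfl) (by rintro a rfl; rfl)
    simp at h1 h2
    omega
end

section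
/- Satisfaction of a synonym OFD is not determined by pairs of tuples: there exists a relation instance I = {t1, t2, t3} over attributes {X, Y} and a sense assignment such that every two-element subset of I satisfies the OFD X → Y, but I itself does not satisfy X → Y. -/
variable {α V S : Type*}

/-! When all tuples agree on `X` there is a single class, so synonym OFD satisfaction asks for
one sense shared by all `Y`-values. Three tuples with the same key and values `0, 1, 2 : Fin 3`,
where value `v` has every sense except `v`, share a sense pairwise but not all together. -/

theorem OFDsat_iff_of_agree {names : V → Set S} {I : Set (α → V)} {X Y : Set α}
    (hI : I.Nonempty) (hX : ∀ t ∈ I, ∀ u ∈ I, ∀ a ∈ X, u a = t a) :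
    OFDsat names I X Y ↔ ∀ A ∈ Y, ∃ s, ∀ u ∈ I, s ∈ names (u A) := by
  constructor
  · intro h A hA
    obtain ⟨t, ht⟩ := hI
    obtain ⟨s, hs⟩ := h t ht A hA
    exact ⟨s, fun u hu => hs u hu (hX t ht u hu)⟩
  · rintro h t - A hA
    obtain ⟨s, hs⟩ := h A hA
    exact ⟨s, fun u hu _ => hs u hu⟩

def keyedTuple (i : Fin 3) : Fin 2 → Fin 3 := ![0, i]

theorem keyedTuple_agree {I : Set (Fin 2 → Fin 3)} (hI : I ⊆ Set.range keyedTuple) :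
    ∀ t ∈ I, ∀ u ∈ I, ∀ a ∈ ({0} : Set (Fin 2)), u a = t a := by
  rintro t ht u hu a rfl
  obtain ⟨i, rfl⟩ := hI ht
  obtain ⟨j, rfl⟩ := hI hu
  rfl

theorem OFDsat_keyedTuple_pair (i j : Fin 3) :
    OFDsat (fun v => {v}ᶜ) {keyedTuple i, keyedTuple j} {0} {1} := by
  rw [OFDsat_iff_of_agree (Set.insert_nonempty _ _)
    (keyedTuple_agree (Set.insert_subset (Set.mem_range_self i)
      (Set.singleton_subset_iff.2 (Set.mem_range_self j))))]
  rintro A rfl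
  obtain ⟨s, hsi, hsj⟩ : ∃ s : Fin 3, s ≠ i ∧ s ≠ j := by revert i j; decide
  refine ⟨s, ?_⟩
  rintro u (rfl | rfl) <;> assumption

theorem not_OFDsat_keyedTuple_triple :
    ¬ OFDsat (fun v => {v}ᶜ) {keyedTuple 0, keyedTuple 1, keyedTuple 2} {0} {1} := by
  rw [OFDsat_iff_of_agree (Set.insert_nonempty _ _) (keyedTuple_agree ?_)]
  · intro h
    obtain ⟨s, hs⟩ := h 1 rfl
    exact hs (keyedTuple s) (by fin_cases s <;> simp) rfl
  · rintro t (rfl | rfl | rfl) <;> exact Set.mem_range_self _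

/-- Synonym OFD satisfaction is not determined by pairs of tuples: every two-element
subset of `{t1, t2, t3}` satisfies `X → Y` (attributes `0, 1` of `Fin 2`), but the
three-tuple instance does not. -/
theorem not_pairwise :
    ∃ (V S : Type) (names : V → Set S) (t1 t2 t3 : Fin 2 → V),
      OFDsat names {t1, t2} {0} {1} ∧
      OFDsat names {t1, t3} {0} {1} ∧
      OFDsat names {t2, t3} {0} {1} ∧
      ¬ OFDsat names {t1, t2, t3} {0} {1} :=
  ⟨Fin 3, Fin 3, fun v => {v}ᶜ, keyedTuple 0, keyedTuple 1, keyedTuple 2,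
    OFDsat_keyedTuple_pair 0 1, OFDsat_keyedTuple_pair 0 2, OFDsat_keyedTuple_pair 1 2,
    not_OFDsat_keyedTuple_triple⟩
end
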